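/- arXiv:2512.03968 — 4 statements merged into one kernel-verified Lean document; each statement's English description precedes it below -/
import Mathlib

section
/- Let μ be a probability measure on a countable set S with finite Shannon entropy. Then Σ_x μ(x) log(Σ_y min(μ(y)/μ(x), 1)) ≥ (1/2) Ent(μ) - 1, where the outer sum ranges over x with μ(x) > 0. -/
/-!
Rank the atoms of `μ` in decreasing order, breaking ties injectively, so that the atom `x` has
rank `r x ≥ 1` with `r` injective on the support. The `r x` atoms of rank at most `r x` all have
mass at least `μ x`, so `∑_y min (μ y / μ x) 1 ≥ r x`. The elementary bound `log u ≥ 1 - u⁻¹` at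
`u = μ x * r x ^ 2` gives `-μ x log μ x ≤ 2 μ x log (r x) + 1 / r x ^ 2`, and summing over the
support with `∑ 1 / k ^ 2 = π ^ 2 / 6 ≤ 2` yields `Ent μ ≤ 2 ∑_x μ x log ∑_y min (μ y / μ x) 1 + 2`.
-/

open Set Function Real

lemma injOn_ncard_setOf_le {S β : Type*} [LinearOrder β] {key : S → β} {s : Set S}
    (hkey : InjOn key s) (hfin : ∀ x ∈ s, {y ∈ s | key x ≤ key y}.Finite) :
    InjOn (fun x => {y ∈ s | key x ≤ key y}.ncard) s := by
  have hlt : ∀ x ∈ s, ∀ y ∈ s, key x < key y →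
      {z ∈ s | key y ≤ key z}.ncard < {z ∈ s | key x ≤ key z}.ncard := by
    intro x hx y hy hxy
    refine ncard_lt_ncard ⟨fun z hz => ⟨hz.1, hxy.le.trans hz.2⟩, fun hsub => ?_⟩ (hfin x hx)
    exact (hsub ⟨hx, le_rfl⟩).2.not_gt hxy
  intro x hx y hy hr
  by_contra hne
  rcases lt_or_gt_of_ne (hkey.ne hx hy hne) with hxy | hyx
  · exact (hlt x hx y hy hxy).ne' hr
  · exact (hlt y hy x hx hyx).ne hr

namespace Set.InjOn

variable {S : Type*} {f : S → ℕ} {s : Set S} {g : ℕ → ℝ}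

lemma summable_indicator_comp (hf : InjOn f s) (hg : Summable g) :
    Summable (s.indicator (g ∘ f)) :=
  summable_subtype_iff_indicator.mp (hg.comp_injective hf.injective)

lemma tsum_indicator_comp_le (hf : InjOn f s) (hg : Summable g) (hg_nonneg : ∀ n, 0 ≤ g n) :
    ∑' x, s.indicator (g ∘ f) x ≤ ∑' n, g n := by
  rw [← tsum_subtype]
  exact tsum_comp_le_tsum_of_inj hg hg_nonneg hf.injective

end Set.InjOn

lemma tsum_one_div_nat_sq_le_two : ∑' n : ℕ, 1 / (n : ℝ) ^ 2 ≤ 2 := by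
  rw [hasSum_zeta_two.tsum_eq]
  nlinarith [pi_pos, pi_lt_d2]

lemma neg_mul_log_le_two_mul_mul_log_add_one_div_sq {t k u : ℝ} (ht : 0 < t) (hk : 0 < k)
    (hku : k ≤ u) : -(t * log t) ≤ 2 * (t * log u) + 1 / k ^ 2 := by
  have hlog := one_sub_inv_le_log_of_pos (mul_pos ht (pow_pos hk 2))
  rw [log_mul ht.ne' (pow_pos hk 2).ne', log_pow, Nat.cast_ofNat] at hlog
  have hmono := log_le_log hk hku
  have hinv : t * (t * k ^ 2)⁻¹ = 1 / k ^ 2 := by field_simp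
  nlinarith

section Atoms

variable {S : Type*} {μ : S → ℝ}

lemma finite_setOf_le_of_summable (hμ : Summable μ) {a : ℝ} (ha : 0 < a) :
    {y | a ≤ μ y}.Finite :=
  (Filter.mem_cofinite.mp (hμ.tendsto_cofinite_zero (Iio_mem_nhds ha))).subset
    fun y (hy : a ≤ μ y) (hlt : μ y < a) => hy.not_gt hlt

variable (hnn : ∀ x, 0 ≤ μ x) (hμ : Summable μ) {x : S} (hx : 0 < μ x)
include hnn hx

lemma min_div_nonneg (y : S) : 0 ≤ min (μ y / μ x) 1 :=
  le_min (div_nonneg (hnn y) hx.le) zero_le_one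

include hμ

lemma summable_min_div : Summable fun y => min (μ y / μ x) 1 :=
  .of_nonneg_of_le (min_div_nonneg hnn hx) (fun _ => min_le_left _ _) (hμ.div_const _)

lemma one_le_tsum_min_div : 1 ≤ ∑' y, min (μ y / μ x) 1 := by
  simpa [div_self hx.ne'] using
    (summable_min_div hnn hμ hx).le_tsum x fun y _ => min_div_nonneg hnn hx y

lemma tsum_min_div_le (hsum : ∑' x, μ x = 1) : ∑' y, min (μ y / μ x) 1 ≤ (μ x)⁻¹ := by
  calc ∑' y, min (μ y / μ x) 1 ≤ ∑' y, μ y / μ x :=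
        (summable_min_div hnn hμ hx).tsum_le_tsum (fun _ => min_le_left _ _) (hμ.div_const _)
    _ = (μ x)⁻¹ := by rw [tsum_div_const, hsum, one_div]

lemma mul_log_tsum_min_div_nonneg : 0 ≤ μ x * log (∑' y, min (μ y / μ x) 1) :=
  mul_nonneg hx.le (log_nonneg (one_le_tsum_min_div hnn hμ hx))

lemma mul_log_tsum_min_div_le (hsum : ∑' x, μ x = 1) :
    μ x * log (∑' y, min (μ y / μ x) 1) ≤ -(μ x * log (μ x)) := by
  have hlog : log (∑' y, min (μ y / μ x) 1) ≤ -log (μ x) := by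
    rw [← log_inv]
    exact log_le_log (by linarith [one_le_tsum_min_div hnn hμ hx]) (tsum_min_div_le hnn hμ hx hsum)
  nlinarith

lemma ncard_le_tsum_min_div {A : Set S} (hA : ∀ y ∈ A, μ x ≤ μ y) :
    (A.ncard : ℝ) ≤ ∑' y, min (μ y / μ x) 1 := by
  by_cases hfin : A.Finite
  · calc (A.ncard : ℝ) = ∑ y ∈ hfin.toFinset, min (μ y / μ x) 1 := by
          rw [ncard_eq_toFinset_card A hfin, Finset.cast_card]
          refine Finset.sum_congr rfl fun y hy => ?_
          exact (min_eq_right ((one_le_div hx).mpr (hA y (hfin.mem_toFinset.mp hy)))).symm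
      _ ≤ ∑' y, min (μ y / μ x) 1 :=
          (summable_min_div hnn hμ hx).sum_le_tsum _ fun y _ => min_div_nonneg hnn hx y
  · rw [Set.Infinite.ncard hfin, Nat.cast_zero]
    exact tsum_nonneg (min_div_nonneg hnn hx)

omit hx

lemma exists_injOn_rank_le_tsum_min_div :
    ∃ r : S → ℕ, InjOn r {x | 0 < μ x} ∧
      ∀ x, 0 < μ x → 1 ≤ r x ∧ (r x : ℝ) ≤ ∑' y, min (μ y / μ x) 1 := by
  obtain ⟨ι, hι⟩ := countable_iff_exists_injOn.mp hμ.countable_support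
  let key : S → ℝ ×ₗ ℕ := fun x => toLex (μ x, ι x)
  have hkey : InjOn key {x | 0 < μ x} := fun x hx y hy hxy =>
    hι (ne_of_gt hx) (ne_of_gt hy) (congrArg (fun p => (ofLex p).2) hxy)
  have hle : ∀ {x y}, key x ≤ key y → μ x ≤ μ y := fun h => Prod.Lex.monotone_fst _ _ h
  have hfin : ∀ x ∈ {x | 0 < μ x}, {y ∈ {x | 0 < μ x} | key x ≤ key y}.Finite :=
    fun x hx => (finite_setOf_le_of_summable hμ hx).subset fun y hy => hle hy.2
  refine ⟨_, injOn_ncard_setOf_le hkey hfin, fun x hx => ⟨?_, ?_⟩⟩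
  · exact (ncard_pos (hfin x hx)).mpr ⟨x, hx, le_rfl⟩
  · exact ncard_le_tsum_min_div hnn hμ hx fun y hy => hle hy.2

end Atoms

theorem stmt1_general {S : Type*} (μ : S → ℝ)
    (hnn : ∀ x, 0 ≤ μ x) (hsum : ∑' x, μ x = 1)
    (hent : Summable (fun x => μ x * Real.log (μ x))) :
    (1/2) * (-∑' x, μ x * Real.log (μ x)) - 1
      ≤ ∑' x, (if 0 < μ x then μ x * Real.log (∑' y, min (μ y / μ x) 1) else 0) := by
  have hμ : Summable μ := by
    by_contra h
    simp [tsum_eq_zero_of_not_summable h] at hsum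
  set T : S → ℝ := fun x => if 0 < μ x then μ x * log (∑' y, min (μ y / μ x) 1) else 0
  obtain ⟨r, hr_inj, hr⟩ := exists_injOn_rank_le_tsum_min_div hnn hμ
  set g : S → ℝ := {x | 0 < μ x}.indicator ((fun n : ℕ => 1 / (n : ℝ) ^ 2) ∘ r)
  have hT : ∀ x, 0 ≤ T x ∧ T x ≤ -(μ x * log (μ x)) := by
    intro x
    by_cases hx : 0 < μ x
    · simp only [T, if_pos hx]
      exact ⟨mul_log_tsum_min_div_nonneg hnn hμ hx, mul_log_tsum_min_div_le hnn hμ hx hsum⟩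
    · simp [T, le_antisymm (not_lt.mp hx) (hnn x)]
  have hpoint : ∀ x, -(μ x * log (μ x)) ≤ 2 * T x + g x := by
    intro x
    by_cases hx : 0 < μ x
    · simp only [T, g, if_pos hx, indicator_of_mem (show x ∈ {x | 0 < μ x} from hx), comp_apply]
      exact neg_mul_log_le_two_mul_mul_log_add_one_div_sq hx
        (by exact_mod_cast (hr x hx).1) (hr x hx).2
    · simp [T, g, le_antisymm (not_lt.mp hx) (hnn x)]
  have hT_smb : Summable T := .of_nonneg_of_le (fun x => (hT x).1) (fun x => (hT x).2) hent.neg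
  have hg_smb : Summable g := hr_inj.summable_indicator_comp hasSum_zeta_two.summable
  have hg_le : ∑' x, g x ≤ 2 :=
    (hr_inj.tsum_indicator_comp_le hasSum_zeta_two.summable fun n => by positivity).trans
      tsum_one_div_nat_sq_le_two
  have hent_le := hent.neg.tsum_le_tsum hpoint ((hT_smb.mul_left 2).add hg_smb)
  rw [tsum_neg, (hT_smb.mul_left 2).tsum_add hg_smb, tsum_mul_left] at hent_le
  linarith

/-- For a probability mass function μ on a countable set S with finite
Shannon entropy, Σ_{x : μ(x)>0} μ(x) log(Σ_y min(μ(y)/μ(x), 1)) ≥ (1/2) Ent(μ) - 1. -/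
theorem stmt1 {S : Type*} [Countable S] (μ : S → ℝ)
    (hnn : ∀ x, 0 ≤ μ x) (hsum : ∑' x, μ x = 1)
    (hent : Summable (fun x => μ x * Real.log (μ x))) :
    (1/2) * (-∑' x, μ x * Real.log (μ x)) - 1
      ≤ ∑' x, (if 0 < μ x then μ x * Real.log (∑' y, min (μ y / μ x) 1) else 0) :=
  stmt1_general μ hnn hsum hent
end

section
/- Let μ be a probability measure on a countable set S whose atoms, listed in decreasing order, are μ_1 ≥ μ_2 ≥ μ_3 ≥ .... Then for every a > 1, Ent(μ) ≤ a·Σ_{k≥1} μ_k log k + a·Σ_{k≥1} k^{-a} log k. -/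
lemma log3_gt_one : (1:ℝ) < Real.log 3 :=
  (Real.lt_log_iff_exp_lt (by norm_num)).2 (by have := Real.exp_one_lt_d9; linarith)

lemma sum_shift (c : ℝ) (hc : c < -1) : Summable (fun k:ℕ => ((k:ℝ)+1)^c) := by
  have h0 := (Real.summable_nat_rpow (p:=c)).2 hc
  have h := (summable_nat_add_iff (f := fun n:ℕ => (n:ℝ)^c) 1).2 h0
  simpa [Nat.cast_add] using h

lemma sum_nuL (a : ℝ) (ha : 1 < a) :
    Summable (fun k:ℕ => ((k:ℝ)+1)^(-a) * Real.log ((k:ℝ)+1)) := by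
  have hb : Summable (fun k:ℕ => ((k:ℝ)+1)^(-((a+1)/2))) := sum_shift _ (by linarith)
  have hε : (0:ℝ) < (a-1)/2 := by linarith
  apply Summable.of_nonneg_of_le
    (fun k => mul_nonneg (Real.rpow_nonneg (by positivity) _)
      (Real.log_nonneg (by linarith [Nat.cast_nonneg (α := ℝ) k])))
    (fun k => ?_) (hb.mul_left (2/(a-1)))
  have hx : (0:ℝ) < (k:ℝ)+1 := by positivity
  have hlog : Real.log ((k:ℝ)+1) ≤ ((k:ℝ)+1)^((a-1)/2) / ((a-1)/2) := by
    have h1 : Real.log (((k:ℝ)+1)^((a-1)/2)) ≤ ((k:ℝ)+1)^((a-1)/2) - 1 :=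
      Real.log_le_sub_one_of_pos (Real.rpow_pos_of_pos hx _)
    rw [Real.log_rpow hx] at h1
    rw [le_div_iff₀ hε]
    nlinarith [Real.rpow_pos_of_pos hx ((a-1)/2)]
  have h2 : ((k:ℝ)+1)^(-a) * Real.log ((k:ℝ)+1)
      ≤ ((k:ℝ)+1)^(-a) * (((k:ℝ)+1)^((a-1)/2) / ((a-1)/2)) :=
    mul_le_mul_of_nonneg_left hlog (Real.rpow_nonneg (le_of_lt hx) _)
  calc ((k:ℝ)+1)^(-a) * Real.log ((k:ℝ)+1)
      ≤ ((k:ℝ)+1)^(-a) * (((k:ℝ)+1)^((a-1)/2) / ((a-1)/2)) := h2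
    _ = 2/(a-1) * ((k:ℝ)+1)^(-((a+1)/2)) := by
        rw [show -((a+1)/2) = -a + (a-1)/2 by ring, Real.rpow_add hx]
        field_simp

lemma numericB (a : ℝ) (ha : 1 < a) (ha2 : a < 3/2) :
    0 ≤ (a * ((2:ℝ)^(-a) * Real.log 2) - (2:ℝ)^(-a))
      + (a * ((4:ℝ)^(-a) * Real.log 4) - (4:ℝ)^(-a))
      + (a * ((8:ℝ)^(-a) * Real.log 8) - (8:ℝ)^(-a))
      + (a * ((16:ℝ)^(-a) * Real.log 16) - (16:ℝ)^(-a)) := by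
  set t : ℝ := (2:ℝ)^(-a) with hts
  have ht0 : 0 < t := Real.rpow_pos_of_pos (by norm_num) _
  have e4 : (4:ℝ)^(-a) = t*t := by
    rw [show (4:ℝ) = 2*2 by norm_num, Real.mul_rpow (by norm_num) (by norm_num)]
  have e8 : (8:ℝ)^(-a) = t*(t*t) := by
    rw [show (8:ℝ) = 2*4 by norm_num, Real.mul_rpow (by norm_num) (by norm_num), e4]
  have e16 : (16:ℝ)^(-a) = t*(t*(t*t)) := by
    rw [show (16:ℝ) = 2*8 by norm_num, Real.mul_rpow (by norm_num) (by norm_num), e8]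
  have l4 : Real.log 4 = 2 * Real.log 2 := by
    rw [show (4:ℝ) = 2^(2:ℕ) by norm_num, Real.log_pow]; norm_num
  have l8 : Real.log 8 = 3 * Real.log 2 := by
    rw [show (8:ℝ) = 2^(3:ℕ) by norm_num, Real.log_pow]; norm_num
  have l16 : Real.log 16 = 4 * Real.log 2 := by
    rw [show (16:ℝ) = 2^(4:ℕ) by norm_num, Real.log_pow]; norm_num
  have htl : (0.3535:ℝ) ≤ t := by
    have h1 : (2:ℝ)^(-(3/2):ℝ) ≤ t := Real.rpow_le_rpow_of_exponent_le (by norm_num) (by linarith)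
    have h2 : ((2:ℝ)^(-(3/2):ℝ))^(2:ℕ) = 1/8 := by
      rw [← Real.rpow_natCast ((2:ℝ)^(-(3/2):ℝ)) 2, ← Real.rpow_mul (by norm_num : (0:ℝ) ≤ 2)]
      rw [show (-(3/2):ℝ)*(2:ℕ) = ((-3:ℤ):ℝ) by push_cast; ring, Real.rpow_intCast]
      norm_num
    have h3 : 0 ≤ (2:ℝ)^(-(3/2):ℝ) := Real.rpow_nonneg (by norm_num) _
    nlinarith [h1, h2, h3]
  have hlog2 := Real.log_two_gt_d9
  set L : ℝ := Real.log 2 with hLs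
  have hu : (0.6931471803:ℝ) ≤ a * L := by nlinarith
  have h2u : (0:ℝ) ≤ 2*(a*L) - 1 := by nlinarith
  have h3u : (0:ℝ) ≤ 3*(a*L) - 1 := by nlinarith
  have h4u : (0:ℝ) ≤ 4*(a*L) - 1 := by nlinarith
  have hsq : (0.3535:ℝ)^2 ≤ t^2 := by nlinarith
  have hcub : (0.3535:ℝ)^3 ≤ t^3 := by nlinarith
  have hinner : 0 ≤ (a*L - 1) + t*(2*(a*L)-1) + t^2*(3*(a*L)-1) + t^3*(4*(a*L)-1) := by
    nlinarith [mul_le_mul_of_nonneg_right htl h2u, mul_le_mul_of_nonneg_right hsq h3u,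
      mul_le_mul_of_nonneg_right hcub h4u]
  have := mul_nonneg ht0.le hinner
  rw [e4, e8, e16, l4, l8, l16]
  nlinarith [this]

lemma keyT (a : ℝ) (ha : 1 < a)
    (hν : Summable (fun k:ℕ => ((k:ℝ)+1)^(-a)))
    (hνL : Summable (fun k:ℕ => ((k:ℝ)+1)^(-a) * Real.log ((k:ℝ)+1))) :
    (∑' k:ℕ, ((k:ℝ)+1)^(-a)) - 1 ≤ a * ∑' k:ℕ, ((k:ℝ)+1)^(-a) * Real.log ((k:ℝ)+1) := by
  set F : ℕ → ℝ := fun k => a * (((k:ℝ)+1)^(-a) * Real.log ((k:ℝ)+1)) - ((k:ℝ)+1)^(-a) with hF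
  have hFs : Summable F := (hνL.mul_left a).sub hν
  have htsF : ∑' k, F k = a * (∑' k:ℕ, ((k:ℝ)+1)^(-a) * Real.log ((k:ℝ)+1))
      - ∑' k:ℕ, ((k:ℝ)+1)^(-a) := by
    rw [hF, Summable.tsum_sub (hνL.mul_left a) hν, tsum_mul_left]
  have hF0 : F 0 = -1 := by simp [hF]
  have hzero : ∑' k, F k = F 0 + ∑' k, F (k+1) := Summable.tsum_eq_zero_add hFs
  have hlog2 := Real.log_two_gt_d9
  have hFform : ∀ k : ℕ, F (k+1)
      = (((k:ℝ)+1)+1)^(-a) * (a * Real.log (((k:ℝ)+1)+1) - 1) := by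
    intro k; simp only [hF]; push_cast; ring
  have hpos : ∀ j : ℕ, 1 ≤ j → 0 ≤ F (j+1) := by
    intro j hj
    have hx : (0:ℝ) < ((j:ℝ)+1)+1 := by positivity
    have hν0 : (0:ℝ) ≤ (((j:ℝ)+1)+1)^(-a) := Real.rpow_nonneg hx.le _
    have hl : Real.log 3 ≤ Real.log (((j:ℝ)+1)+1) := by
      apply Real.log_le_log (by norm_num)
      have : (1:ℝ) ≤ (j:ℝ) := by exact_mod_cast hj
      linarith
    have h1 : (1:ℝ) ≤ a * Real.log (((j:ℝ)+1)+1) := by nlinarith [log3_gt_one]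
    rw [hFform]
    exact mul_nonneg hν0 (by linarith)
  have hkey : (0:ℝ) ≤ ∑' k, F (k+1) := by
    by_cases hA : (3:ℝ)/2 ≤ a
    · apply tsum_nonneg
      intro k
      have hx : (0:ℝ) < ((k:ℝ)+1)+1 := by positivity
      have hν0 : (0:ℝ) ≤ (((k:ℝ)+1)+1)^(-a) := Real.rpow_nonneg hx.le _
      have hl : Real.log 2 ≤ Real.log (((k:ℝ)+1)+1) := by
        apply Real.log_le_log (by norm_num)
        have : (0:ℝ) ≤ (k:ℝ) := Nat.cast_nonneg k
        linarith
      have h1 : (1:ℝ) ≤ a * Real.log (((k:ℝ)+1)+1) := by nlinarith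
      rw [hFform]
      exact mul_nonneg hν0 (by linarith)
    · push_neg at hA
      have hGs : Summable (fun k => F (k+1)) := (summable_nat_add_iff 1).2 hFs
      have hsub : ∑ j ∈ ({0,2,6,14} : Finset ℕ), F (j+1) ≤ ∑' j, F (j+1) := by
        apply Summable.sum_le_tsum _ _ hGs
        intro j hj
        apply hpos
        rcases Nat.eq_zero_or_pos j with h | h
        · exfalso; apply hj; simp [h]
        · exact h
      have hsum4 : ∑ j ∈ ({0,2,6,14} : Finset ℕ), F (j+1)
          = (a * ((2:ℝ)^(-a) * Real.log 2) - (2:ℝ)^(-a))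
          + (a * ((4:ℝ)^(-a) * Real.log 4) - (4:ℝ)^(-a))
          + (a * ((8:ℝ)^(-a) * Real.log 8) - (8:ℝ)^(-a))
          + (a * ((16:ℝ)^(-a) * Real.log 16) - (16:ℝ)^(-a)) := by
        simp only [hF]
        norm_num [Finset.sum_insert, Finset.mem_insert]
        ring
      have hnum := numericB a ha hA
      linarith [hsub, hsum4, hnum]
  linarith [hzero, htsF, hF0, hkey]

/-- If the atoms of a probability measure on a countable set are listed in
non-increasing order μ_1 ≥ μ_2 ≥ ... (here `μ k` denotes μ_{k+1}), then for every a > 1,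
Ent(μ) ≤ a·Σ_{k≥1} μ_k log k + a·Σ_{k≥1} k^{-a} log k. -/
theorem stmt2 (μ : ℕ → ℝ) (hnn : ∀ k, 0 ≤ μ k) (hanti : Antitone μ)
    (hsum : ∑' k, μ k = 1) (a : ℝ) (ha : 1 < a) :
    -∑' k, μ k * Real.log (μ k)
      ≤ a * ∑' k : ℕ, μ k * Real.log ((k : ℝ) + 1)
        + a * ∑' k : ℕ, ((k : ℝ) + 1) ^ (-a) * Real.log ((k : ℝ) + 1) := by
  have hμs : Summable μ := by
    by_contra h
    rw [tsum_eq_zero_of_not_summable h] at hsum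
    norm_num at hsum
  have hν : Summable (fun k:ℕ => ((k:ℝ)+1)^(-a)) := sum_shift (-a) (by linarith)
  have hνL := sum_nuL a ha
  have hL0 : ∀ k:ℕ, (0:ℝ) ≤ Real.log ((k:ℝ)+1) :=
    fun k => Real.log_nonneg (by linarith [Nat.cast_nonneg (α := ℝ) k])
  -- atom bound : μ k ≤ 1/(k+1)
  have hatom : ∀ k : ℕ, μ k ≤ 1/((k:ℝ)+1) := by
    intro k
    have hx : (0:ℝ) < (k:ℝ)+1 := by positivity
    have h1 : (Finset.range (k+1)).card • μ k ≤ ∑ j ∈ Finset.range (k+1), μ j :=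
      Finset.card_nsmul_le_sum _ _ _ (fun j hj => hanti (by
        have := Finset.mem_range.1 hj; omega))
    have h2 : ∑ j ∈ Finset.range (k+1), μ j ≤ ∑' j, μ j :=
      Summable.sum_le_tsum _ (fun i _ => hnn i) hμs
    rw [hsum] at h2
    rw [Finset.card_range, nsmul_eq_mul] at h1
    rw [le_div_iff₀ hx]
    push_cast at h1
    nlinarith
  -- key comparison : μ_k log(k+1) ≤ -(μ_k log μ_k)
  have hkey : ∀ k : ℕ, μ k * Real.log ((k:ℝ)+1) ≤ -(μ k * Real.log (μ k)) := by
    intro k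
    rcases eq_or_lt_of_le (hnn k) with h0 | h0
    · simp [← h0]
    · have hx : (0:ℝ) < (k:ℝ)+1 := by positivity
      have hlμ : Real.log (μ k) ≤ -Real.log ((k:ℝ)+1) := by
        have := Real.log_le_log h0 (hatom k)
        rwa [one_div, Real.log_inv] at this
      nlinarith [mul_le_mul_of_nonneg_left hlμ (hnn k)]
  -- main pointwise bound
  have hmain : ∀ k : ℕ, -(μ k * Real.log (μ k))
      ≤ a * (μ k * Real.log ((k:ℝ)+1)) + (((k:ℝ)+1)^(-a) - μ k) := by
    intro k
    have hx : (0:ℝ) < (k:ℝ)+1 := by positivity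
    have hνp : (0:ℝ) < ((k:ℝ)+1)^(-a) := Real.rpow_pos_of_pos hx _
    rcases eq_or_lt_of_le (hnn k) with h0 | h0
    · simp [← h0]
      positivity
    · have hlog : Real.log (((k:ℝ)+1)^(-a) / μ k) ≤ ((k:ℝ)+1)^(-a) / μ k - 1 :=
        Real.log_le_sub_one_of_pos (by positivity)
      rw [Real.log_div (ne_of_gt hνp) (ne_of_gt h0), Real.log_rpow hx] at hlog
      have h2 := mul_le_mul_of_nonneg_left hlog (hnn k)
      have h3 : μ k * (((k:ℝ)+1)^(-a) / μ k) = ((k:ℝ)+1)^(-a) := by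
        field_simp
      nlinarith [h2, h3]
  by_cases hμL : Summable (fun k:ℕ => μ k * Real.log ((k:ℝ)+1))
  · -- main case
    have hEnt : Summable (fun k:ℕ => -(μ k * Real.log (μ k))) := by
      apply Summable.of_nonneg_of_le
        (fun k => le_trans (mul_nonneg (hnn k) (hL0 k)) (hkey k))
        (fun k => ?_) ((hμL.mul_left a).add hν)
      have := hmain k
      have : -(μ k * Real.log (μ k)) ≤ a * (μ k * Real.log ((k:ℝ)+1)) + ((k:ℝ)+1)^(-a) := by
        linarith [hnn k]
      exact this
    have h1 : ∑' k, -(μ k * Real.log (μ k))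
        ≤ ∑' k:ℕ, (a * (μ k * Real.log ((k:ℝ)+1)) + (((k:ℝ)+1)^(-a) - μ k)) :=
      Summable.tsum_le_tsum hmain hEnt ((hμL.mul_left a).add (hν.sub hμs))
    have h2 : ∑' k:ℕ, (a * (μ k * Real.log ((k:ℝ)+1)) + (((k:ℝ)+1)^(-a) - μ k))
        = a * (∑' k:ℕ, μ k * Real.log ((k:ℝ)+1)) + ((∑' k:ℕ, ((k:ℝ)+1)^(-a)) - 1) := by
      rw [Summable.tsum_add (hμL.mul_left a) (hν.sub hμs), tsum_mul_left,
        Summable.tsum_sub hν hμs, hsum]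
    have hT := keyT a ha hν hνL
    have h4 : -∑' k, μ k * Real.log (μ k) = ∑' k, -(μ k * Real.log (μ k)) := by
      rw [tsum_neg]
    linarith [h1, h2 ▸ h1, hT, h4.le, h4.ge]
  · -- degenerate case : entropy sum diverges as well
    have h2 : ¬ Summable (fun k:ℕ => μ k * Real.log (μ k)) := by
      intro h
      exact hμL (Summable.of_nonneg_of_le
        (fun k => mul_nonneg (hnn k) (hL0 k)) hkey h.neg)
    rw [tsum_eq_zero_of_not_summable hμL, tsum_eq_zero_of_not_summable h2]
    have h3 : (0:ℝ) ≤ ∑' k:ℕ, ((k:ℝ)+1)^(-a) * Real.log ((k:ℝ)+1) :=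
      tsum_nonneg (fun k => mul_nonneg (Real.rpow_nonneg (by positivity) _) (hL0 k))
    nlinarith
end

section
/- Let G = (V,E) be a locally finite graph with maximum degree at most d, let f : V → ℝ take values in an interval I, and let φ : I → ℝ be a C³ concave function. Fix a vertex x and set m = min over the closed neighbourhood {x} ∪ {y : y ~ x} of f, and suppose φ'''(t) ≥ 0 for all t ∈ [m, f(x)]. Then Δ(φ∘f)(x) ≤ φ'(f(x))·Δf(x) + (1/(4d))·φ''(f(x))·(f(x) - m)², where Δ = P - I for the lazy walk operator P. -/
/-- Tangent line inequality for concave functions with a derivative within the set. -/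
lemma stmt10_tangent_le {I : Set ℝ} {φ φ' : ℝ → ℝ} (hconc : ConcaveOn ℝ I φ)
    (hder1 : ∀ t ∈ I, HasDerivWithinAt φ (φ' t) I t)
    {a b : ℝ} (ha : a ∈ I) (hb : b ∈ I) :
    φ b - φ a ≤ φ' a * (b - a) := by
  rcases lt_trichotomy a b with h | rfl | h
  · have hs := hconc.slope_le_of_hasDerivWithinAt ha hb h (hder1 a ha)
    rw [slope_def_field] at hs
    have := (div_le_iff₀ (by linarith : (0:ℝ) < b - a)).mp hs
    linarith
  · simp
  · have hs := hconc.le_slope_of_hasDerivWithinAt hb ha h (hder1 a ha)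
    rw [slope_def_field] at hs
    have := (le_div_iff₀ (by linarith : (0:ℝ) < a - b)).mp hs
    nlinarith

/-- The key second-order Taylor-type inequality at the minimum. -/
lemma stmt10_cubic_key {I : Set ℝ} {φ φ' φ'' φ''' : ℝ → ℝ}
    (hder1 : ∀ t ∈ I, HasDerivWithinAt φ (φ' t) I t)
    (hder2 : ∀ t ∈ I, HasDerivWithinAt φ' (φ'' t) I t)
    (hder3 : ∀ t ∈ I, HasDerivWithinAt φ'' (φ''' t) I t)
    {m a : ℝ} (hma : m < a) (hIcc : Set.Icc m a ⊆ I)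
    (hφ3 : ∀ t ∈ Set.Icc m a, 0 ≤ φ''' t) :
    φ m - φ a - φ' a * (m - a) ≤ 1 / 2 * φ'' a * (m - a) ^ 2 := by
  have haI : a ∈ I := hIcc (Set.right_mem_Icc.mpr hma.le)
  have hIoo : Set.Ioo m a ⊆ I := Set.Ioo_subset_Icc_self.trans hIcc
  have hnhds : ∀ t ∈ Set.Ioo m a, I ∈ nhds t := fun t ht =>
    mem_nhds_iff.mpr ⟨Set.Ioo m a, hIoo, isOpen_Ioo, ht⟩
  have hcont2 : ContinuousOn φ'' (Set.Icc m a) := fun t ht =>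
    ((hder3 t (hIcc ht)).continuousWithinAt).mono hIcc
  -- φ'' is monotone on [m, a]
  have hmono2 : MonotoneOn φ'' (Set.Icc m a) := by
    apply monotoneOn_of_deriv_nonneg (convex_Icc m a) hcont2
    · intro t ht
      rw [interior_Icc] at ht
      exact ((hder3 t (hIcc (Set.Ioo_subset_Icc_self ht))).hasDerivAt
        (hnhds t ht)).differentiableAt.differentiableWithinAt
    · intro t ht
      rw [interior_Icc] at ht
      rw [((hder3 t (hIcc (Set.Ioo_subset_Icc_self ht))).hasDerivAt (hnhds t ht)).deriv]
      exact hφ3 t (Set.Ioo_subset_Icc_self ht)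
  -- q t = φ' t - φ'' a * t is antitone on [m, a]
  have hq : AntitoneOn (fun t => φ' t - φ'' a * t) (Set.Icc m a) := by
    apply antitoneOn_of_deriv_nonpos (convex_Icc m a)
    · exact ContinuousOn.sub
        (fun t ht => ((hder2 t (hIcc ht)).continuousWithinAt).mono hIcc)
        (continuousOn_const.mul continuousOn_id)
    · intro t ht
      rw [interior_Icc] at ht
      exact ((((hder2 t (hIcc (Set.Ioo_subset_Icc_self ht))).hasDerivAt
        (hnhds t ht)).sub ((hasDerivAt_id t).const_mul (φ'' a)))).differentiableAt.differentiableWithinAt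
    · intro t ht
      rw [interior_Icc] at ht
      have hda : HasDerivAt (fun t => φ' t - φ'' a * t) (φ'' t - φ'' a * 1) t :=
        ((hder2 t (hIcc (Set.Ioo_subset_Icc_self ht))).hasDerivAt
          (hnhds t ht)).sub ((hasDerivAt_id t).const_mul (φ'' a))
      rw [hda.deriv]
      have := hmono2 (Set.Ioo_subset_Icc_self ht) (Set.right_mem_Icc.mpr hma.le) ht.2.le
      linarith
  -- h t = φ t - φ' a * t - φ'' a / 2 * (t - a)^2 is monotone on [m, a]
  have hh : MonotoneOn (fun t => φ t - φ' a * t - φ'' a / 2 * (t - a) ^ 2) (Set.Icc m a) := by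
    apply monotoneOn_of_deriv_nonneg (convex_Icc m a)
    · exact ContinuousOn.sub
        (ContinuousOn.sub (fun t ht => ((hder1 t (hIcc ht)).continuousWithinAt).mono hIcc)
          (continuousOn_const.mul continuousOn_id))
        (Continuous.continuousOn (by continuity))
    · intro t ht
      rw [interior_Icc] at ht
      have hda : HasDerivAt (fun t => φ t - φ' a * t - φ'' a / 2 * (t - a) ^ 2)
          (φ' t - φ' a * 1 - φ'' a / 2 * (2 * (t - a) ^ 1 * 1)) t := by
        exact (((hder1 t (hIcc (Set.Ioo_subset_Icc_self ht))).hasDerivAt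
          (hnhds t ht)).sub ((hasDerivAt_id t).const_mul (φ' a))).sub
          ((((hasDerivAt_id t).sub_const a).pow 2).const_mul (φ'' a / 2))
      exact hda.differentiableAt.differentiableWithinAt
    · intro t ht
      rw [interior_Icc] at ht
      have hda : HasDerivAt (fun t => φ t - φ' a * t - φ'' a / 2 * (t - a) ^ 2)
          (φ' t - φ' a * 1 - φ'' a / 2 * (2 * (t - a) ^ 1 * 1)) t := by
        exact (((hder1 t (hIcc (Set.Ioo_subset_Icc_self ht))).hasDerivAt
          (hnhds t ht)).sub ((hasDerivAt_id t).const_mul (φ' a))).sub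
          ((((hasDerivAt_id t).sub_const a).pow 2).const_mul (φ'' a / 2))
      rw [hda.deriv]
      have hqt := hq (Set.Ioo_subset_Icc_self ht) (Set.right_mem_Icc.mpr hma.le) ht.2.le
      simp only at hqt
      nlinarith
  have := hh (Set.left_mem_Icc.mpr hma.le) (Set.right_mem_Icc.mpr hma.le) hma.le
  simp only at this
  nlinarith

/-- At a point which is approachable from the left inside I, φ'' ≤ 0 for concave φ. -/
lemma stmt10_second_deriv_nonpos {I : Set ℝ} {φ φ' φ'' : ℝ → ℝ} (hconc : ConcaveOn ℝ I φ)
    (hder1 : ∀ t ∈ I, HasDerivWithinAt φ (φ' t) I t)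
    (hder2 : ∀ t ∈ I, HasDerivWithinAt φ' (φ'' t) I t)
    {m a : ℝ} (hma : m < a) (hIcc : Set.Icc m a ⊆ I) :
    φ'' a ≤ 0 := by
  have haI : a ∈ I := hIcc (Set.right_mem_Icc.mpr hma.le)
  have hanti : AntitoneOn φ' I := by
    intro u hu v hv huv
    rcases eq_or_lt_of_le huv with rfl | huv'
    · exact le_refl _
    · exact (hconc.le_slope_of_hasDerivWithinAt hu hv huv' (hder1 v hv)).trans
        (hconc.slope_le_of_hasDerivWithinAt hu hv huv' (hder1 u hu))
  have h1 : HasDerivWithinAt φ' (φ'' a) (Set.Ioo m a) a :=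
    (hder2 a haI).mono (Set.Ioo_subset_Icc_self.trans hIcc)
  rw [hasDerivWithinAt_iff_tendsto_slope] at h1
  have hdiff : Set.Ioo m a \ {a} = Set.Ioo m a := by
    apply Set.diff_singleton_eq_self; simp
  rw [hdiff] at h1
  haveI : (nhdsWithin a (Set.Ioo m a)).NeBot := right_nhdsWithin_Ioo_neBot hma
  refine le_of_tendsto h1 ?_
  filter_upwards [eventually_mem_nhdsWithin] with t ht
  have hta : t < a := ht.2
  have : φ' a ≤ φ' t := hanti ((Set.Ioo_subset_Icc_self.trans hIcc) ht) haI hta.le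
  rw [slope_def_field]
  apply div_nonpos_of_nonneg_of_nonpos <;> linarith

/-- The Markov operator of the lazy random walk on a locally finite graph. -/
noncomputable def lazyOp {V : Type*} (G : SimpleGraph V) [DecidableRel G.Adj]
    [G.LocallyFinite] (f : V → ℝ) (x : V) : ℝ :=
  f x / 2 + (∑ y ∈ G.neighborFinset x, f y) / (2 * G.degree x)

/-- On a locally finite graph with maximum degree at most d, if f takes
values in an interval I, φ is C³ and concave on I, m is the minimum of f over the closed
neighbourhood of x, and φ''' ≥ 0 on [m, f(x)], then
Δ(φ∘f)(x) ≤ φ'(f(x))·Δf(x) + (1/(4d))·φ''(f(x))·(f(x) - m)², where Δ = P - I. -/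
theorem stmt10 {V : Type*} [DecidableEq V] (G : SimpleGraph V) [DecidableRel G.Adj]
    [G.LocallyFinite]
    (d : ℕ) (hd : 1 ≤ d) (hdeg : ∀ v, G.degree v ≤ d) (hiso : ∀ v, 0 < G.degree v)
    (I : Set ℝ) (hI : I.OrdConnected)
    (f : V → ℝ) (hf : ∀ v, f v ∈ I)
    (φ φ' φ'' φ''' : ℝ → ℝ)
    (hconc : ConcaveOn ℝ I φ)
    (hder1 : ∀ t ∈ I, HasDerivWithinAt φ (φ' t) I t)
    (hder2 : ∀ t ∈ I, HasDerivWithinAt φ' (φ'' t) I t)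
    (hder3 : ∀ t ∈ I, HasDerivWithinAt φ'' (φ''' t) I t)
    (x : V)
    (m : ℝ) (hm : m = ((insert x (G.neighborFinset x)).image f).min'
      ((Finset.insert_nonempty x (G.neighborFinset x)).image f))
    (hφ3 : ∀ t ∈ Set.Icc m (f x), 0 ≤ φ''' t) :
    lazyOp G (φ ∘ f) x - (φ ∘ f) x
      ≤ φ' (f x) * (lazyOp G f x - f x) + (1 / (4 * d)) * φ'' (f x) * (f x - m) ^ 2 := by
  have tangent_le : ∀ {a b : ℝ}, a ∈ I → b ∈ I → φ b - φ a ≤ φ' a * (b - a) :=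
    fun ha hb => stmt10_tangent_le hconc hder1 ha hb
  have cubic_key : ∀ {mm a : ℝ}, mm < a → Set.Icc mm a ⊆ I →
      (∀ t ∈ Set.Icc mm a, 0 ≤ φ''' t) →
      φ mm - φ a - φ' a * (mm - a) ≤ 1 / 2 * φ'' a * (mm - a) ^ 2 :=
    fun h1 h2 h3 => stmt10_cubic_key hder1 hder2 hder3 h1 h2 h3
  have second_deriv_nonpos : ∀ {mm a : ℝ}, mm < a → Set.Icc mm a ⊆ I → φ'' a ≤ 0 :=
    fun h1 h2 => stmt10_second_deriv_nonpos hconc hder1 hder2 h1 h2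
  classical
  set N := G.neighborFinset x with hN
  set a := f x with ha
  have haI : a ∈ I := hf x
  have hDpos : (0:ℝ) < (G.degree x : ℝ) := by exact_mod_cast hiso x
  have hdR : (0:ℝ) < (d:ℝ) := by exact_mod_cast hd
  have hDled : (G.degree x : ℝ) ≤ (d : ℝ) := by exact_mod_cast hdeg x
  -- facts about m
  have hmin := Finset.min'_mem ((insert x N).image f) ((Finset.insert_nonempty x N).image f)
  rw [← hm] at hmin
  obtain ⟨z, hzmem, hz⟩ := Finset.mem_image.mp hmin
  have hmle : ∀ v ∈ insert x N, m ≤ f v := fun v hv =>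
    hm ▸ Finset.min'_le _ _ (Finset.mem_image_of_mem f hv)
  have hma : m ≤ a := hmle x (Finset.mem_insert_self _ _)
  have hmI : m ∈ I := hz ▸ hf z
  have hIcc : Set.Icc m a ⊆ I := hI.out hmI haI
  -- rewrite lazyOp
  have key : ∀ g : V → ℝ, lazyOp G g x - g x
      = (∑ y ∈ N, (g y - g x)) / (2 * (G.degree x : ℝ)) := by
    intro g
    rw [lazyOp, Finset.sum_sub_distrib, Finset.sum_const, nsmul_eq_mul,
      SimpleGraph.card_neighborFinset_eq_degree]
    field_simp
    ring
  rw [key (φ ∘ f), key f]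
  set D := (G.degree x : ℝ)
  set S := ∑ y ∈ N, (f y - a) with hS
  set T := ∑ y ∈ N, (φ (f y) - φ a - φ' a * (f y - a)) with hT
  have hsplit : ∑ y ∈ N, ((φ ∘ f) y - (φ ∘ f) x) = T + φ' a * S := by
    rw [hT, hS, Finset.mul_sum, ← Finset.sum_add_distrib]
    apply Finset.sum_congr rfl
    intro y _
    simp only [Function.comp_apply, ← ha]
    ring
  rw [hsplit]
  have hTy : ∀ y ∈ N, φ (f y) - φ a - φ' a * (f y - a) ≤ 0 := by
    intro y _
    have := tangent_le haI (hf y)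
    linarith
  have hdiv : (T + φ' a * S) / (2 * D) = T / (2 * D) + φ' a * (S / (2 * D)) := by
    field_simp
  rw [hdiv]
  have hmain : T / (2 * D) ≤ 1 / (4 * d) * φ'' a * (a - m) ^ 2 := by
    rcases eq_or_lt_of_le hma with heq | hlt
    · have hT0 : T ≤ 0 := Finset.sum_nonpos hTy
      have h1 : T / (2 * D) ≤ 0 := div_nonpos_of_nonpos_of_nonneg hT0 (by linarith)
      have h2 : (a - m) ^ 2 = 0 := by rw [heq]; ring
      rw [h2]
      linarith
    · have hzN : z ∈ N := by
        rcases Finset.mem_insert.mp hzmem with rfl | h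
        · exact absurd hz (by rw [← ha]; linarith)
        · exact h
      have hTz : φ (f z) - φ a - φ' a * (f z - a) ≤ 1 / 2 * φ'' a * (m - a) ^ 2 := by
        rw [hz]
        exact cubic_key hlt hIcc hφ3
      have hsum_le : T ≤ 1 / 2 * φ'' a * (m - a) ^ 2 := by
        have e := (Finset.add_sum_erase N (fun y => φ (f y) - φ a - φ' a * (f y - a)) hzN).symm
        have hrest : ∑ y ∈ N.erase z, (φ (f y) - φ a - φ' a * (f y - a)) ≤ 0 :=
          Finset.sum_nonpos fun y hy => hTy y (Finset.mem_of_mem_erase hy)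
        rw [hT, e]
        linarith
      have hφ2 : φ'' a ≤ 0 := second_deriv_nonpos hlt hIcc
      have hc0 : φ'' a * (a - m) ^ 2 ≤ 0 := mul_nonpos_of_nonpos_of_nonneg hφ2 (sq_nonneg _)
      have e1 : (m - a) ^ 2 = (a - m) ^ 2 := by ring
      have hnum : T ≤ 1 / 2 * φ'' a * (a - m) ^ 2 := by rw [← e1]; exact hsum_le
      have step1 : T / (2 * D) ≤ (1 / 2 * φ'' a * (a - m) ^ 2) / (2 * D) :=
        div_le_div_of_nonneg_right hnum (by linarith)
      have e2 : (1 / 2 * φ'' a * (a - m) ^ 2) / (2 * D)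
          = (φ'' a * (a - m) ^ 2) * (1 / (4 * D)) := by
        rw [mul_one_div, div_eq_div_iff (by linarith : (0:ℝ) < 2 * D).ne' (by linarith : (0:ℝ) < 4 * D).ne']
        ring
      have h1d : (1:ℝ) / (4 * d) ≤ 1 / (4 * D) := by
        apply one_div_le_one_div_of_le
        · linarith
        · linarith
      have step2 : (φ'' a * (a - m) ^ 2) * (1 / (4 * D))
          ≤ (φ'' a * (a - m) ^ 2) * (1 / (4 * d)) :=
        mul_le_mul_of_nonpos_left h1d hc0
      calc T / (2 * D) ≤ (1 / 2 * φ'' a * (a - m) ^ 2) / (2 * D) := step1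
        _ = (φ'' a * (a - m) ^ 2) * (1 / (4 * D)) := e2
        _ ≤ (φ'' a * (a - m) ^ 2) * (1 / (4 * d)) := step2
        _ = 1 / (4 * ↑d) * φ'' a * (a - m) ^ 2 := by ring
  linarith
end

section
/- Let G = (V,E) be a locally finite connected graph of non-negative Ollivier–Ricci curvature (in the Lipschitz-contraction sense for the lazy walk operator P). Suppose V is the disjoint union X ∪ K ∪ Y where K is finite, non-empty, and connected, and there are no edges between X and Y. Then there exists a 1-Lipschitz function f : V → ℝ and a constant λ ∈ ℝ such that (i) Δf = λ on K, (ii) f restricted to X is the pointwise minimum over all 1-Lipschitz extensions of f|_K and Δf ≥ λ on X, and (iii) f restricted to Y is the pointwise maximum over all 1-Lipschitz extensions of f|_K and Δf ≤ λ on Y. -/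
set_option linter.unusedSectionVars false
set_option linter.unusedTactic false

namespace Stmt14Aux

open SimpleGraph

variable {V : Type*} (G : SimpleGraph V) [DecidableRel G.Adj] [G.LocallyFinite]

lemma walkLip (g : V → ℝ) (hg : ∀ u v, G.Adj u v → |g u - g v| ≤ 1)
    {u v : V} (p : G.Walk u v) : |g u - g v| ≤ p.length := by
  induction p with
  | nil => simp
  | @cons a b c h p ih =>
      calc |g a - g c| ≤ |g a - g b| + |g b - g c| := abs_sub_le _ _ _
        _ ≤ 1 + p.length := add_le_add (hg _ _ h) ih
        _ = ((p.length + 1 : ℕ) : ℝ) := by push_cast; ring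
        _ = _ := by simp [SimpleGraph.Walk.length_cons]

lemma distLip (hconn : G.Connected) (g : V → ℝ)
    (hg : ∀ u v, G.Adj u v → |g u - g v| ≤ 1) (u v : V) :
    |g u - g v| ≤ (G.dist u v : ℝ) := by
  obtain ⟨p, hp⟩ := hconn.exists_walk_length_eq_dist u v
  simpa [hp] using walkLip G g hg p

lemma adj_dist_one {u v : V} (h : G.Adj u v) : G.dist u v = 1 :=
  (SimpleGraph.dist_eq_one_iff_adj).mpr h

-- lazy operator lemmas
lemma lazy_mono_shift (hiso : ∀ v, 0 < G.degree v) (g g' : V → ℝ) (c : ℝ)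
    (h : ∀ v, g v ≤ g' v + c) (x : V) : lazyOp G g x ≤ lazyOp G g' x + c := by
  have hd : (0 : ℝ) < (G.degree x : ℝ) := by exact_mod_cast hiso x
  have hsum : ∑ y ∈ G.neighborFinset x, g y ≤
      (∑ y ∈ G.neighborFinset x, g' y) + c * (G.degree x : ℝ) := by
    calc ∑ y ∈ G.neighborFinset x, g y ≤ ∑ y ∈ G.neighborFinset x, (g' y + c) :=
          Finset.sum_le_sum fun i _ => h i
      _ = (∑ y ∈ G.neighborFinset x, g' y) + c * (G.degree x : ℝ) := by
          rw [Finset.sum_add_distrib, Finset.sum_const, G.card_neighborFinset_eq_degree]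
          push_cast; ring
  unfold lazyOp
  have h2 : (∑ y ∈ G.neighborFinset x, g y) / (2 * (G.degree x : ℝ)) ≤
      (∑ y ∈ G.neighborFinset x, g' y) / (2 * (G.degree x : ℝ)) + c / 2 := by
    rw [div_add' _ _ _ (by positivity)]
    apply div_le_div_of_nonneg_right ?_ (by positivity) |>.trans_eq rfl
    · calc ∑ y ∈ G.neighborFinset x, g y ≤
          (∑ y ∈ G.neighborFinset x, g' y) + c * (G.degree x : ℝ) := hsum
        _ = (∑ y ∈ G.neighborFinset x, g' y) + c / 2 * (2 * (G.degree x : ℝ)) := by ring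
  have h1 : g x / 2 ≤ g' x / 2 + c / 2 := by linarith [h x]
  linarith

lemma lazy_strict (hiso : ∀ v, 0 < G.degree v) (g g' : V → ℝ)
    (hle : ∀ v, g v ≤ g' v) (x : V) (heq : lazyOp G g x = lazyOp G g' x) :
    g x = g' x ∧ ∀ y, G.Adj x y → g y = g' y := by
  have hd : (0 : ℝ) < (G.degree x : ℝ) := by exact_mod_cast hiso x
  have hsum : ∑ y ∈ G.neighborFinset x, g y ≤ ∑ y ∈ G.neighborFinset x, g' y :=
    Finset.sum_le_sum fun i _ => hle i
  have hdiv : (∑ y ∈ G.neighborFinset x, g y) / (2 * (G.degree x : ℝ)) ≤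
      (∑ y ∈ G.neighborFinset x, g' y) / (2 * (G.degree x : ℝ)) :=
    div_le_div_of_nonneg_right hsum (by positivity) |>.trans_eq rfl
  unfold lazyOp at heq
  have hx : g x = g' x := by nlinarith [hle x]
  have hs : (∑ y ∈ G.neighborFinset x, g y) = ∑ y ∈ G.neighborFinset x, g' y := by
    have : (∑ y ∈ G.neighborFinset x, g y) / (2 * (G.degree x : ℝ)) =
        (∑ y ∈ G.neighborFinset x, g' y) / (2 * (G.degree x : ℝ)) := by linarith
    field_simp at this
    exact this
  refine ⟨hx, fun y hy => ?_⟩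
  exact (Finset.sum_eq_sum_iff_of_le (fun i _ => hle i)).mp hs y
    ((G.mem_neighborFinset x y).mpr hy)

end Stmt14Aux
open Classical in
noncomputable def extF {V : Type*} (G : SimpleGraph V) {K : Set V} (Y : Set V)
    (hKfin : K.Finite) (hKne : K.Nonempty) (h : V → ℝ) (v : V) : ℝ :=
  if v ∈ K then h v
  else if v ∈ Y then
    hKfin.toFinset.inf' (by simpa using hKne) (fun k => h k + (G.dist v k : ℝ))
  else
    hKfin.toFinset.sup' (by simpa using hKne) (fun k => h k - (G.dist v k : ℝ))

section Ext

variable {V : Type*} (G : SimpleGraph V) [DecidableRel G.Adj] [G.LocallyFinite]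
  {K : Set V} (Y : Set V) (hKfin : K.Finite) (hKne : K.Nonempty)

lemma extF_eqK (h : V → ℝ) {k : V} (hk : k ∈ K) : extF G Y hKfin hKne h k = h k := by
  simp [extF, hk]

lemma extF_le_extF (h h' : V → ℝ) (c : ℝ) (hc : ∀ k ∈ K, h k ≤ h' k + c) (v : V) :
    extF G Y hKfin hKne h v ≤ extF G Y hKfin hKne h' v + c := by
  unfold extF
  split_ifs with h1 h2
  · exact hc v h1
  · rw [sub_le_iff_le_add.symm]
    apply Finset.le_inf'
    intro k hk
    have hkK : k ∈ K := hKfin.mem_toFinset.mp hk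
    have := Finset.inf'_le (f := fun k => h k + (G.dist v k : ℝ)) hk
    have h3 := hc k hkK
    calc hKfin.toFinset.inf' (by simpa using hKne) (fun k => h k + (G.dist v k : ℝ)) - c
        ≤ h k + (G.dist v k : ℝ) - c := by linarith
      _ ≤ h' k + (G.dist v k : ℝ) := by linarith
  · apply Finset.sup'_le
    intro k hk
    have hkK : k ∈ K := hKfin.mem_toFinset.mp hk
    have h4 : h' k - (G.dist v k : ℝ) ≤
        hKfin.toFinset.sup' (by simpa using hKne) (fun k => h' k - (G.dist v k : ℝ)) :=
      Finset.le_sup' (fun k => h' k - (G.dist v k : ℝ)) hk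
    have h3 := hc k hkK
    linarith

lemma extF_congr (h h' : V → ℝ) (hc : ∀ k ∈ K, h k = h' k) (v : V) :
    extF G Y hKfin hKne h v = extF G Y hKfin hKne h' v := by
  have h1 := extF_le_extF G Y hKfin hKne h h' 0 (fun k hk => by rw [hc k hk]; simp) v
  have h2 := extF_le_extF G Y hKfin hKne h' h 0 (fun k hk => by rw [hc k hk]; simp) v
  simp at h1 h2; linarith

lemma extF_add_const (h : V → ℝ) (c : ℝ) (v : V) :
    extF G Y hKfin hKne (fun w => h w + c) v = extF G Y hKfin hKne h v + c := by
  have h1 := extF_le_extF G Y hKfin hKne (fun w => h w + c) h c (fun k _ => le_rfl) v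
  have h2 := extF_le_extF G Y hKfin hKne h (fun w => h w + c) (-c)
    (fun k _ => by simp) v
  linarith

/-- minimality of the extension on the `X`-part -/
lemma extF_min (hconn : G.Connected) (h g : V → ℝ)
    (hg : ∀ u v, G.Adj u v → |g u - g v| ≤ 1) (hgK : ∀ k ∈ K, g k = h k)
    {v : V} (hv1 : v ∉ K) (hv2 : v ∉ Y) : extF G Y hKfin hKne h v ≤ g v := by
  unfold extF
  rw [if_neg hv1, if_neg hv2]
  apply Finset.sup'_le
  intro k hk
  have hkK : k ∈ K := hKfin.mem_toFinset.mp hk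
  have := Stmt14Aux.distLip G hconn g hg v k
  have habs : |g v - g k| ≤ (G.dist v k : ℝ) := this
  have := hgK k hkK
  have := abs_sub_le_iff.mp habs
  linarith [this.2]

/-- maximality of the extension on the `Y`-part -/
lemma extF_max (hconn : G.Connected) (h g : V → ℝ)
    (hg : ∀ u v, G.Adj u v → |g u - g v| ≤ 1) (hgK : ∀ k ∈ K, g k = h k)
    {v : V} (hv1 : v ∉ K) (hv2 : v ∈ Y) : g v ≤ extF G Y hKfin hKne h v := by
  unfold extF
  rw [if_neg hv1, if_pos hv2]
  apply Finset.le_inf'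
  intro k hk
  have hkK : k ∈ K := hKfin.mem_toFinset.mp hk
  have habs : |g v - g k| ≤ (G.dist v k : ℝ) := Stmt14Aux.distLip G hconn g hg v k
  have := hgK k hkK
  have := abs_sub_le_iff.mp habs
  linarith [this.1]

end Ext
section Lip

variable {V : Type*} (G : SimpleGraph V) [DecidableRel G.Adj] [G.LocallyFinite]
  {K : Set V} (X Y : Set V) (hKfin : K.Finite) (hKne : K.Nonempty)

/-- K-Lipschitz condition -/
def KLip (G : SimpleGraph V) (K : Set V) (h : V → ℝ) : Prop :=
  ∀ k ∈ K, ∀ k' ∈ K, |h k - h k'| ≤ (G.dist k k' : ℝ)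

lemma extF_step (hconn : G.Connected)
    (hcover : ∀ v, v ∈ X ∨ v ∈ K ∨ v ∈ Y)
    (hnoedge : ∀ x ∈ X, ∀ y ∈ Y, ¬ G.Adj x y)
    (hXY : Disjoint X Y)
    (h : V → ℝ) (hK : KLip G K h) {u v : V} (huv : G.Adj u v) :
    extF G Y hKfin hKne h u ≤ extF G Y hKfin hKne h v + 1 := by
  classical
  have hd1 : (G.dist u v : ℝ) = 1 := by rw [Stmt14Aux.adj_dist_one G huv]; norm_num
  have hdvu : (G.dist v u : ℝ) = 1 := by rw [SimpleGraph.dist_comm] at hd1; exact hd1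
  have tri1 : ∀ k, (G.dist u k : ℝ) ≤ 1 + (G.dist v k : ℝ) := by
    intro k
    have := hconn.dist_triangle (u := u) (v := v) (w := k)
    calc (G.dist u k : ℝ) ≤ (G.dist u v : ℝ) + (G.dist v k : ℝ) := by exact_mod_cast this
      _ = 1 + (G.dist v k : ℝ) := by rw [hd1]
  have tri2 : ∀ k, (G.dist v k : ℝ) ≤ 1 + (G.dist u k : ℝ) := by
    intro k
    have := hconn.dist_triangle (u := v) (v := u) (w := k)
    calc (G.dist v k : ℝ) ≤ (G.dist v u : ℝ) + (G.dist u k : ℝ) := by exact_mod_cast this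
      _ = 1 + (G.dist u k : ℝ) := by rw [hdvu]
  have hmem : ∀ {k : V}, k ∈ K → k ∈ hKfin.toFinset := fun hk => hKfin.mem_toFinset.mpr hk
  have hKd : ∀ k ∈ K, ∀ k' ∈ K, h k - h k' ≤ (G.dist k k' : ℝ) := by
    intro k hk k' hk'
    exact (abs_sub_le_iff.mp (hK k hk k' hk')).1
  have hne' : hKfin.toFinset.Nonempty := by simpa using hKne
  by_cases hu1 : u ∈ K
  · -- u ∈ K
    rw [extF_eqK G Y hKfin hKne h hu1]
    by_cases hv1 : v ∈ K
    · rw [extF_eqK G Y hKfin hKne h hv1]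
      have := hKd u hu1 v hv1
      linarith [hd1 ▸ this]
    · by_cases hv2 : v ∈ Y
      · show h u ≤ (if v ∈ K then h v else if v ∈ Y then _ else _) + 1
        rw [if_neg hv1, if_pos hv2, ← sub_le_iff_le_add]
        apply Finset.le_inf'
        intro k hk
        have hkK : k ∈ K := hKfin.mem_toFinset.mp hk
        have h5 := hKd u hu1 k hkK
        have h6 := tri1 k
        linarith
      · show h u ≤ (if v ∈ K then h v else if v ∈ Y then _ else _) + 1
        rw [if_neg hv1, if_neg hv2]
        have : h u - (G.dist v u : ℝ) ≤
            hKfin.toFinset.sup' hne' (fun k => h k - (G.dist v k : ℝ)) :=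
          Finset.le_sup' (fun k => h k - (G.dist v k : ℝ)) (hmem hu1)
        rw [hdvu] at this
        linarith
  · by_cases hu2 : u ∈ Y
    · -- u ∈ Y branch (inf')
      show (if u ∈ K then h u else if u ∈ Y then _ else _) ≤ _ + 1
      rw [if_neg hu1, if_pos hu2]
      by_cases hv1 : v ∈ K
      · rw [extF_eqK G Y hKfin hKne h hv1]
        have : hKfin.toFinset.inf' hne' (fun k => h k + (G.dist u k : ℝ)) ≤
            h v + (G.dist u v : ℝ) :=
          Finset.inf'_le (f := fun k => h k + (G.dist u k : ℝ)) (hmem hv1)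
        rw [hd1] at this
        linarith
      · by_cases hv2 : v ∈ Y
        · show _ ≤ (if v ∈ K then h v else if v ∈ Y then _ else _) + 1
          rw [if_neg hv1, if_pos hv2, ← sub_le_iff_le_add]
          apply Finset.le_inf'
          intro k hk
          have hinf : hKfin.toFinset.inf' hne'
              (fun k => h k + (G.dist u k : ℝ)) ≤ h k + (G.dist u k : ℝ) :=
            Finset.inf'_le (f := fun k => h k + (G.dist u k : ℝ)) hk
          have := tri1 k
          linarith
        · exfalso
          have hvX : v ∈ X := by
            rcases hcover v with hx | hk | hy
            · exact hx
            · exact absurd hk hv1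
            · exact absurd hy hv2
          exact hnoedge v hvX u hu2 huv.symm
    · -- u ∈ X branch (sup')
      show (if u ∈ K then h u else if u ∈ Y then _ else _) ≤ _ + 1
      rw [if_neg hu1, if_neg hu2]
      by_cases hv1 : v ∈ K
      · rw [extF_eqK G Y hKfin hKne h hv1]
        apply Finset.sup'_le
        intro k hk
        have hkK : k ∈ K := hKfin.mem_toFinset.mp hk
        have h7 : h k - h v ≤ (G.dist k v : ℝ) := hKd k hkK v hv1
        rw [SimpleGraph.dist_comm] at h7
        have := tri2 k
        linarith
      · by_cases hv2 : v ∈ Y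
        · exfalso
          have huX : u ∈ X := by
            rcases hcover u with hx | hk | hy
            · exact hx
            · exact absurd hk hu1
            · exact absurd hy hu2
          exact hnoedge u huX v hv2 huv
        · show _ ≤ (if v ∈ K then h v else if v ∈ Y then _ else _) + 1
          rw [if_neg hv1, if_neg hv2]
          apply Finset.sup'_le
          intro k hk
          have hsup : h k - (G.dist v k : ℝ) ≤
              hKfin.toFinset.sup' hne' (fun k => h k - (G.dist v k : ℝ)) :=
            Finset.le_sup' (fun k => h k - (G.dist v k : ℝ)) hk
          have := tri2 k
          linarith

lemma extF_edgeLip (hconn : G.Connected)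
    (hcover : ∀ v, v ∈ X ∨ v ∈ K ∨ v ∈ Y)
    (hnoedge : ∀ x ∈ X, ∀ y ∈ Y, ¬ G.Adj x y)
    (hXY : Disjoint X Y)
    (h : V → ℝ) (hK : KLip G K h) :
    ∀ u v, G.Adj u v → |extF G Y hKfin hKne h u - extF G Y hKfin hKne h v| ≤ 1 := by
  intro u v huv
  rw [abs_sub_le_iff]
  exact ⟨by linarith [extF_step G X Y hKfin hKne hconn hcover hnoedge hXY h hK huv],
    by linarith [extF_step G X Y hKfin hKne hconn hcover hnoedge hXY h hK huv.symm]⟩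

end Lip
section TT

variable {V : Type*} (G : SimpleGraph V) [DecidableRel G.Adj] [G.LocallyFinite]
  {K : Set V} (X Y : Set V) (hKfin : K.Finite) (hKne : K.Nonempty)

noncomputable def TT (h : V → ℝ) : V → ℝ := lazyOp G (extF G Y hKfin hKne h)

lemma TT_mono_shift (hiso : ∀ v, 0 < G.degree v) (h h' : V → ℝ) (c : ℝ)
    (hc : ∀ k ∈ K, h k ≤ h' k + c) (v : V) :
    TT G Y hKfin hKne h v ≤ TT G Y hKfin hKne h' v + c :=
  Stmt14Aux.lazy_mono_shift G hiso _ _ c (extF_le_extF G Y hKfin hKne h h' c hc) v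

lemma TT_congrK (h h' : V → ℝ) (hc : ∀ k ∈ K, h k = h' k) (v : V) :
    TT G Y hKfin hKne h v = TT G Y hKfin hKne h' v := by
  unfold TT
  congr 1
  funext w
  exact extF_congr G Y hKfin hKne h h' hc w

lemma TT_klip (hconn : G.Connected) (hiso : ∀ v, 0 < G.degree v)
    (hcurv : ∀ (g : V → ℝ) (c : ℝ), (∀ u v, G.Adj u v → |g u - g v| ≤ c) →
      ∀ u v, G.Adj u v → |lazyOp G g u - lazyOp G g v| ≤ c)
    (hcover : ∀ v, v ∈ X ∨ v ∈ K ∨ v ∈ Y)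
    (hnoedge : ∀ x ∈ X, ∀ y ∈ Y, ¬ G.Adj x y)
    (hXY : Disjoint X Y)
    (h : V → ℝ) (hK : KLip G K h) : KLip G K (TT G Y hKfin hKne h) := by
  intro k hk k' hk'
  have hedge := extF_edgeLip G X Y hKfin hKne hconn hcover hnoedge hXY h hK
  have h2 := hcurv (extF G Y hKfin hKne h) 1 hedge
  exact Stmt14Aux.distLip G hconn (TT G Y hKfin hKne h) h2 k k'

-- continuity lemmas
lemma continuous_finset_sup'_real {X' : Type*} [TopologicalSpace X'] {ι : Type*}
    (s : Finset ι) (hs : s.Nonempty) (F : ι → X' → ℝ) (hF : ∀ i, Continuous (F i)) :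
    Continuous fun x => s.sup' hs (fun i => F i x) := by
  induction hs using Finset.Nonempty.cons_induction with
  | singleton i => simpa using hF i
  | cons i s hi hs ih =>
      have : (fun x => (Finset.cons i s hi).sup' (Finset.cons_nonempty hi) (fun j => F j x))
          = fun x => max (F i x) (s.sup' hs (fun j => F j x)) := by
        funext x
        rw [Finset.sup'_cons]
      rw [this]
      exact (hF i).max ih

lemma continuous_finset_inf'_real {X' : Type*} [TopologicalSpace X'] {ι : Type*}
    (s : Finset ι) (hs : s.Nonempty) (F : ι → X' → ℝ) (hF : ∀ i, Continuous (F i)) :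
    Continuous fun x => s.inf' hs (fun i => F i x) := by
  induction hs using Finset.Nonempty.cons_induction with
  | singleton i => simpa using hF i
  | cons i s hi hs ih =>
      have : (fun x => (Finset.cons i s hi).inf' (Finset.cons_nonempty hi) (fun j => F j x))
          = fun x => min (F i x) (s.inf' hs (fun j => F j x)) := by
        funext x
        rw [Finset.inf'_cons]
      rw [this]
      exact (hF i).min ih

lemma continuous_extF_apply (v : V) :
    Continuous fun h : V → ℝ => extF G Y hKfin hKne h v := by
  classical
  unfold extF
  split_ifs with h1 h2
  · exact continuous_apply v
  · exact continuous_finset_inf'_real _ _ _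
      (fun k => (continuous_apply k).add continuous_const)
  · exact continuous_finset_sup'_real _ _ _
      (fun k => (continuous_apply k).sub continuous_const)

lemma continuous_TT_apply (v : V) :
    Continuous fun h : V → ℝ => TT G Y hKfin hKne h v := by
  unfold TT lazyOp
  apply Continuous.add
  · exact (continuous_extF_apply G Y hKfin hKne v).div_const 2
  · apply Continuous.div_const
    exact continuous_finset_sum _ fun y _ => continuous_extF_apply G Y hKfin hKne y

end TT
section Dyn

variable {V : Type*} (G : SimpleGraph V) [DecidableRel G.Adj] [G.LocallyFinite]
  {K : Set V} (X Y : Set V) (hKfin : K.Finite) (hKne : K.Nonempty)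

open Classical in
noncomputable def FF (k₀ : V) (h : V → ℝ) : V → ℝ :=
  fun v => if v ∈ K then TT G Y hKfin hKne h v - TT G Y hKfin hKne h k₀ else 0

noncomputable def lamF (h : V → ℝ) : ℝ :=
  hKfin.toFinset.sup' (by simpa using hKne) (fun k => TT G Y hKfin hKne h k - h k)

noncomputable def muF (h : V → ℝ) : ℝ :=
  hKfin.toFinset.inf' (by simpa using hKne) (fun k => TT G Y hKfin hKne h k - h k)

lemma le_lamF (h : V → ℝ) {k : V} (hk : k ∈ K) :
    TT G Y hKfin hKne h k - h k ≤ lamF G Y hKfin hKne h :=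
  Finset.le_sup' (fun k => TT G Y hKfin hKne h k - h k) (hKfin.mem_toFinset.mpr hk)

lemma muF_le (h : V → ℝ) {k : V} (hk : k ∈ K) :
    muF G Y hKfin hKne h ≤ TT G Y hKfin hKne h k - h k :=
  Finset.inf'_le (f := fun k => TT G Y hKfin hKne h k - h k) (hKfin.mem_toFinset.mpr hk)

lemma muF_le_lamF (h : V → ℝ) : muF G Y hKfin hKne h ≤ lamF G Y hKfin hKne h := by
  obtain ⟨k, hk⟩ := id hKne
  exact (muF_le G Y hKfin hKne h hk).trans (le_lamF G Y hKfin hKne h hk)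

variable (hiso : ∀ v, 0 < G.degree v)
include hiso

lemma lazy_add_const (f : V → ℝ) (c : ℝ) (x : V) :
    lazyOp G (fun v => f v + c) x = lazyOp G f x + c := by
  have h1 := Stmt14Aux.lazy_mono_shift G hiso (fun v => f v + c) f c (fun v => le_rfl) x
  have h2 := Stmt14Aux.lazy_mono_shift G hiso f (fun v => f v + c) (-c) (fun v => by simp) x
  linarith

lemma TT_shift (h : V → ℝ) (c : ℝ) (v : V) :
    TT G Y hKfin hKne (fun w => h w + c) v = TT G Y hKfin hKne h v + c := by
  have h1 := TT_mono_shift G Y hKfin hKne hiso (fun w => h w + c) h c (fun k _ => le_rfl) v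
  have h2 := TT_mono_shift G Y hKfin hKne hiso h (fun w => h w + c) (-c) (fun k _ => by simp) v
  linarith

lemma TT_FF (k₀ : V) (h : V → ℝ) (v : V) :
    TT G Y hKfin hKne (FF G Y hKfin hKne k₀ h) v =
      TT G Y hKfin hKne (TT G Y hKfin hKne h) v - TT G Y hKfin hKne h k₀ := by
  have h1 : ∀ k ∈ K, FF G Y hKfin hKne k₀ h k =
      TT G Y hKfin hKne h k + (-(TT G Y hKfin hKne h k₀)) := by
    intro k hk
    simp only [FF, if_pos hk]
    ring
  calc TT G Y hKfin hKne (FF G Y hKfin hKne k₀ h) v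
      = TT G Y hKfin hKne (fun w => TT G Y hKfin hKne h w + (-(TT G Y hKfin hKne h k₀))) v :=
        TT_congrK G Y hKfin hKne _ _ h1 v
    _ = _ := by rw [TT_shift G Y hKfin hKne hiso]; ring

lemma FF_klip (hconn : G.Connected)
    (hcurv : ∀ (g : V → ℝ) (c : ℝ), (∀ u v, G.Adj u v → |g u - g v| ≤ c) →
      ∀ u v, G.Adj u v → |lazyOp G g u - lazyOp G g v| ≤ c)
    (hcover : ∀ v, v ∈ X ∨ v ∈ K ∨ v ∈ Y)
    (hnoedge : ∀ x ∈ X, ∀ y ∈ Y, ¬ G.Adj x y)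
    (hXY : Disjoint X Y) (k₀ : V)
    (h : V → ℝ) (hK : KLip G K h) : KLip G K (FF G Y hKfin hKne k₀ h) := by
  intro k hk k' hk'
  have hT := TT_klip G X Y hKfin hKne hconn hiso hcurv hcover hnoedge hXY h hK k hk k' hk'
  simp only [FF, if_pos hk, if_pos hk']
  convert hT using 2
  ring

lemma lamF_step (k₀ : V) (h : V → ℝ) :
    lamF G Y hKfin hKne (FF G Y hKfin hKne k₀ h) ≤ lamF G Y hKfin hKne h := by
  apply Finset.sup'_le
  intro k hk
  have hkK : k ∈ K := hKfin.mem_toFinset.mp hk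
  have h1 := TT_FF G Y hKfin hKne hiso k₀ h k
  have h2 : FF G Y hKfin hKne k₀ h k = TT G Y hKfin hKne h k - TT G Y hKfin hKne h k₀ := by
    simp only [FF, if_pos hkK]
  rw [h1, h2]
  have h3 := TT_mono_shift G Y hKfin hKne hiso (TT G Y hKfin hKne h) h
    (lamF G Y hKfin hKne h) (fun k' hk' => by linarith [le_lamF G Y hKfin hKne h hk']) k
  linarith

lemma muF_step (k₀ : V) (h : V → ℝ) :
    muF G Y hKfin hKne h ≤ muF G Y hKfin hKne (FF G Y hKfin hKne k₀ h) := by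
  apply Finset.le_inf'
  intro k hk
  have hkK : k ∈ K := hKfin.mem_toFinset.mp hk
  have h1 := TT_FF G Y hKfin hKne hiso k₀ h k
  have h2 : FF G Y hKfin hKne k₀ h k = TT G Y hKfin hKne h k - TT G Y hKfin hKne h k₀ := by
    simp only [FF, if_pos hkK]
  rw [h1, h2]
  have h3 := TT_mono_shift G Y hKfin hKne hiso h (TT G Y hKfin hKne h)
    (- muF G Y hKfin hKne h) (fun k' hk' => by linarith [muF_le G Y hKfin hKne h hk']) k
  linarith

lemma key_step (k₀ : V) (h : V → ℝ) (c : ℝ)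
    (hTgc : ∀ k' ∈ K, TT G Y hKfin hKne h k' ≤ h k' + c) {k : V} (hk : k ∈ K)
    (hQ : TT G Y hKfin hKne (FF G Y hKfin hKne k₀ h) k - FF G Y hKfin hKne k₀ h k = c) :
    TT G Y hKfin hKne h k - h k = c ∧
      ∀ y ∈ K, G.Adj k y → TT G Y hKfin hKne h y - h y = c := by
  have h1 := TT_FF G Y hKfin hKne hiso k₀ h k
  have h2 : FF G Y hKfin hKne k₀ h k = TT G Y hKfin hKne h k - TT G Y hKfin hKne h k₀ := by
    simp only [FF, if_pos hk]
  have hQ' : TT G Y hKfin hKne (TT G Y hKfin hKne h) k - TT G Y hKfin hKne h k = c := by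
    rw [h1, h2] at hQ
    linarith
  set w := extF G Y hKfin hKne (TT G Y hKfin hKne h) with hw
  set w' := extF G Y hKfin hKne (fun v => h v + c) with hw'
  have hle : ∀ v, w v ≤ w' v := by
    intro v
    have := extF_le_extF G Y hKfin hKne (TT G Y hKfin hKne h) (fun v => h v + c) 0
      (fun k' hk' => by simpa using hTgc k' hk') v
    simpa using this
  have hweq : ∀ v, w' v = extF G Y hKfin hKne h v + c := fun v =>
    extF_add_const G Y hKfin hKne h c v
  have heq : lazyOp G w k = lazyOp G w' k := by
    have hL : lazyOp G w k = TT G Y hKfin hKne (TT G Y hKfin hKne h) k := rfl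
    have hR : lazyOp G w' k = TT G Y hKfin hKne h k + c := by
      have : w' = fun v => extF G Y hKfin hKne h v + c := funext hweq
      rw [this, lazy_add_const G hiso]
      rfl
    rw [hL, hR]
    linarith
  obtain ⟨e1, e2⟩ := Stmt14Aux.lazy_strict G hiso w w' hle k heq
  constructor
  · have hwk : w k = TT G Y hKfin hKne h k := extF_eqK G Y hKfin hKne _ hk
    have hw'k : w' k = h k + c := extF_eqK G Y hKfin hKne _ hk
    rw [hwk, hw'k] at e1
    linarith
  · intro y hy hadj
    have := e2 y hadj
    have hwy : w y = TT G Y hKfin hKne h y := extF_eqK G Y hKfin hKne _ hy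
    have hw'y : w' y = h y + c := extF_eqK G Y hKfin hKne _ hy
    rw [hwy, hw'y] at this
    linarith

lemma continuous_FF (k₀ : V) : Continuous (FF G Y hKfin hKne k₀ : (V → ℝ) → V → ℝ) := by
  apply continuous_pi
  intro v
  unfold FF
  split_ifs with h1
  · exact (continuous_TT_apply G Y hKfin hKne v).sub (continuous_TT_apply G Y hKfin hKne k₀)
  · exact continuous_const

lemma continuous_lamF : Continuous (lamF G Y hKfin hKne : (V → ℝ) → ℝ) := by
  apply continuous_finset_sup'_real _ _ (fun k h => TT G Y hKfin hKne h k - h k)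
  intro k
  exact (continuous_TT_apply G Y hKfin hKne k).sub (continuous_apply k)

end Dyn

-- abstract walk propagation
lemma walk_prop {V : Type*} (G : SimpleGraph V) (K : Set V) (Q : ℕ → V → Prop)
    (hstep : ∀ m, ∀ k ∈ K, Q (m+1) k → Q m k ∧ ∀ y ∈ K, G.Adj k y → Q m y) :
    ∀ (a b : ↥K) (p : (G.induce K).Walk a b) (m : ℕ), Q (m + p.length) a.1 → Q m b.1 := by
  intro a b p
  induction p with
  | nil => intro m h; simpa using h
  | @cons a c b hadj p ih =>
      intro m hQ
      have h1 : Q (m + p.length + 1) a.1 := by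
        have : m + (SimpleGraph.Walk.cons hadj p).length = m + p.length + 1 := by
          rw [SimpleGraph.Walk.length_cons]; ring
        rwa [this] at hQ
      have hadj' : G.Adj a.1 c.1 := hadj
      have h2 := (hstep (m + p.length) a.1 a.2 h1).2 c.1 c.2 hadj'
      exact ih m h2

lemma Q_down {V : Type*} (K : Set V) (Q : ℕ → V → Prop)
    (hmono : ∀ m, ∀ k ∈ K, Q (m+1) k → Q m k) :
    ∀ d m, ∀ k ∈ K, Q (m + d) k → Q m k := by
  intro d
  induction d with
  | zero => intro m k hk h; simpa using h
  | succ d ih =>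
      intro m k hk h
      have : Q (m + d + 1) k := by rwa [show m + (d+1) = m + d + 1 by ring] at h
      exact ih m k hk (hmono (m + d) k hk this)
open Filter Topology in
/-- Laplacian Separation Principle: Let G be a locally finite connected
graph of non-negative Ollivier–Ricci curvature, V = X ∪ K ∪ Y a disjoint union with K
finite, non-empty and connected, and no edges between X and Y. Then there is a
1-Lipschitz f and λ ∈ ℝ with Δf = λ on K; on X, f is the pointwise minimum over all
1-Lipschitz extensions of f|_K and Δf ≥ λ; on Y, f is the pointwise maximum over all
1-Lipschitz extensions of f|_K and Δf ≤ λ.  Here Δ = P - I for the lazy walk operator P. -/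
theorem stmt14 {V : Type*} (G : SimpleGraph V) [DecidableRel G.Adj] [G.LocallyFinite]
    (hconn : G.Connected) (hiso : ∀ v, 0 < G.degree v)
    (hcurv : ∀ (g : V → ℝ) (K : ℝ), (∀ u v, G.Adj u v → |g u - g v| ≤ K) →
      ∀ u v, G.Adj u v → |lazyOp G g u - lazyOp G g v| ≤ K)
    (X K Y : Set V)
    (hcover : ∀ v, v ∈ X ∨ v ∈ K ∨ v ∈ Y)
    (hXK : Disjoint X K) (hXY : Disjoint X Y) (hKY : Disjoint K Y)
    (hKfin : K.Finite) (hKne : K.Nonempty) (hKconn : (G.induce K).Connected)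
    (hnoedge : ∀ x ∈ X, ∀ y ∈ Y, ¬ G.Adj x y) :
    ∃ (f : V → ℝ) (lam : ℝ),
      (∀ u v, G.Adj u v → |f u - f v| ≤ 1) ∧
      (∀ x ∈ K, lazyOp G f x - f x = lam) ∧
      (∀ x ∈ X,
        (∀ g : V → ℝ, (∀ u v, G.Adj u v → |g u - g v| ≤ 1) →
          (∀ k ∈ K, g k = f k) → f x ≤ g x) ∧
        lam ≤ lazyOp G f x - f x) ∧
      (∀ y ∈ Y,
        (∀ g : V → ℝ, (∀ u v, G.Adj u v → |g u - g v| ≤ 1) →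
          (∀ k ∈ K, g k = f k) → g y ≤ f y) ∧
        lazyOp G f y - f y ≤ lam) := by
  classical
  obtain ⟨k₀, hk₀⟩ := id hKne
  set T : (V → ℝ) → V → ℝ := TT G Y hKfin hKne with hT
  set F : (V → ℝ) → V → ℝ := FF G Y hKfin hKne k₀ with hF
  set hs : ℕ → V → ℝ := fun n => F^[n] (fun _ => 0) with hhs
  -- invariants
  have hFF_props : ∀ h : V → ℝ, KLip G K h →
      (∀ v, v ∉ K → F h v = 0) ∧ F h k₀ = 0 ∧ KLip G K (F h) := by
    intro h hK'
    refine ⟨fun v hv => by simp [hF, FF, hv], by simp [hF, FF, hk₀], ?_⟩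
    exact FF_klip G X Y hKfin hKne hiso hconn hcurv hcover hnoedge hXY k₀ h hK'
  have hinv : ∀ n, (∀ v, v ∉ K → hs n v = 0) ∧ hs n k₀ = 0 ∧ KLip G K (hs n) := by
    intro n
    induction n with
    | zero =>
        refine ⟨fun v _ => rfl, rfl, ?_⟩
        intro k _ k' _
        simp only [hhs, Function.iterate_zero_apply]
        simp
    | succ n ih =>
        have : hs (n+1) = F (hs n) := Function.iterate_succ_apply' F n _
        rw [this]
        exact hFF_props (hs n) ih.2.2
  -- the eigenvalue sequence
  set lamseq : ℕ → ℝ := fun n => lamF G Y hKfin hKne (hs n) with hlamseq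
  have hanti : Antitone lamseq := by
    apply antitone_nat_of_succ_le
    intro n
    have : hs (n+1) = F (hs n) := Function.iterate_succ_apply' F n _
    simp only [hlamseq, this]
    exact lamF_step G Y hKfin hKne hiso k₀ (hs n)
  have hmulow : ∀ n, muF G Y hKfin hKne (hs 0) ≤ lamseq n := by
    intro n
    have hmu : ∀ m, muF G Y hKfin hKne (hs 0) ≤ muF G Y hKfin hKne (hs m) := by
      intro m
      induction m with
      | zero => exact le_rfl
      | succ m ih =>
          have : hs (m+1) = F (hs m) := Function.iterate_succ_apply' F m _
          rw [this]
          exact ih.trans (muF_step G Y hKfin hKne hiso k₀ (hs m))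
    exact (hmu n).trans (muF_le_lamF G Y hKfin hKne (hs n))
  set lamb : ℝ := ⨅ n, lamseq n with hlamb
  have hlim : Tendsto lamseq atTop (𝓝 lamb) := by
    apply tendsto_atTop_ciInf hanti
    exact ⟨muF G Y hKfin hKne (hs 0), by rintro _ ⟨n, rfl⟩; exact hmulow n⟩
  -- compactness and subsequence
  set K' : Finset V := hKfin.toFinset with hK'
  have hne' : K'.Nonempty := by rw [hK']; simpa using hKne
  set D : ℝ := ((K'.sup fun k => G.dist k k₀ : ℕ) : ℝ) with hD
  have hbound : ∀ n, ∀ k ∈ K, |hs n k| ≤ D := by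
    intro n k hk
    obtain ⟨h0, hk₀0, hklip⟩ := hinv n
    have h1 : |hs n k - hs n k₀| ≤ (G.dist k k₀ : ℝ) := hklip k hk k₀ hk₀
    rw [hk₀0, sub_zero] at h1
    refine h1.trans ?_
    have : G.dist k k₀ ≤ K'.sup fun k => G.dist k k₀ :=
      Finset.le_sup (f := fun k => G.dist k k₀) (hKfin.mem_toFinset.mpr hk)
    rw [hD]
    exact_mod_cast this
  have hcomp : IsCompact (Set.pi Set.univ fun _ : ↥K' => Set.Icc (-D) D) :=
    isCompact_univ_pi fun _ => isCompact_Icc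
  have hmem : ∀ n, (fun k : ↥K' => hs n k.1) ∈ Set.pi Set.univ fun _ : ↥K' => Set.Icc (-D) D := by
    intro n
    intro k _
    have := hbound n k.1 (hKfin.mem_toFinset.mp k.2)
    exact abs_le.mp this
  obtain ⟨q, hq, φ, hφmono, hφtend⟩ := hcomp.tendsto_subseq hmem
  set hstar : V → ℝ := fun v => if hv : v ∈ K then q ⟨v, by simpa [hK'] using hv⟩ else 0
    with hhstar
  have htendc : ∀ v, Tendsto (fun j => hs (φ j) v) atTop (𝓝 (hstar v)) := by
    intro v
    by_cases hv : v ∈ K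
    · have h1 := tendsto_pi_nhds.mp hφtend ⟨v, hKfin.mem_toFinset.mpr hv⟩
      have : hstar v = q ⟨v, hKfin.mem_toFinset.mpr hv⟩ := by simp [hhstar, hv]
      rw [this]
      exact h1
    · have : hstar v = 0 := by simp [hhstar, hv]
      rw [this]
      have heq : ∀ j, hs (φ j) v = 0 := fun j => (hinv (φ j)).1 v hv
      simpa [heq] using tendsto_const_nhds (α := ℝ) (f := atTop (α := ℕ))
  have htend : Tendsto (fun j => hs (φ j)) atTop (𝓝 hstar) := tendsto_pi_nhds.mpr htendc
  have hstarklip : KLip G K hstar := by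
    intro k hk k' hk'
    have t1 : Tendsto (fun j => |hs (φ j) k - hs (φ j) k'|) atTop
        (𝓝 |hstar k - hstar k'|) := ((htendc k).sub (htendc k')).abs
    exact le_of_tendsto t1 (Eventually.of_forall fun j => (hinv (φ j)).2.2 k hk k' hk')
  -- the limit is an additive eigenfunction level by level
  have hφatTop : Tendsto φ atTop atTop := hφmono.tendsto_atTop
  have hlamconst : ∀ m, lamF G Y hKfin hKne (F^[m] hstar) = lamb := by
    intro m
    have contIter : Continuous (F^[m]) :=
      (continuous_FF G Y hKfin hKne hiso k₀).iterate m
    have t3 : Tendsto (fun j => lamF G Y hKfin hKne (F^[m] (hs (φ j)))) atTop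
        (𝓝 (lamF G Y hKfin hKne (F^[m] hstar))) :=
      (((continuous_lamF G Y hKfin hKne hiso).comp contIter).tendsto hstar).comp htend
    have t1 : Tendsto (fun j => lamseq (m + φ j)) atTop (𝓝 lamb) :=
      hlim.comp (tendsto_atTop_mono (fun j => Nat.le_add_left (φ j) m) hφatTop)
    have t2 : ∀ j, lamseq (m + φ j) = lamF G Y hKfin hKne (F^[m] (hs (φ j))) := by
      intro j
      simp only [hlamseq, hhs]
      rw [Function.iterate_add_apply]
    rw [show (fun j => lamseq (m + φ j)) = fun j => lamF G Y hKfin hKne (F^[m] (hs (φ j)))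
      from funext t2] at t1
    exact tendsto_nhds_unique t3 t1
  have hstarIterKlip : ∀ m, KLip G K (F^[m] hstar) := by
    intro m
    induction m with
    | zero => simpa using hstarklip
    | succ m ih =>
        rw [Function.iterate_succ_apply']
        exact (hFF_props _ ih).2.2
  -- the Q predicate and its propagation
  set Q : ℕ → V → Prop := fun m k => T (F^[m] hstar) k - F^[m] hstar k = lamb with hQdef
  have hstep : ∀ m, ∀ k ∈ K, Q (m+1) k → Q m k ∧ ∀ y ∈ K, G.Adj k y → Q m y := by
    intro m k hk hQ1
    have hTgc : ∀ k' ∈ K, T (F^[m] hstar) k' ≤ F^[m] hstar k' + lamb := by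
      intro k' hk'
      have := le_lamF G Y hKfin hKne (F^[m] hstar) hk'
      rw [hlamconst m] at this
      simp only [hT]
      linarith
    have hQ1' : T (F (F^[m] hstar)) k - F (F^[m] hstar) k = lamb := by
      have : F^[m+1] hstar = F (F^[m] hstar) := Function.iterate_succ_apply' F m _
      rw [← this]
      exact hQ1
    exact key_step G Y hKfin hKne hiso k₀ (F^[m] hstar) lamb hTgc hk hQ1'
  have hQmono : ∀ m, ∀ k ∈ K, Q (m+1) k → Q m k := fun m k hk h => (hstep m k hk h).1
  have hQdown := Q_down K Q hQmono
  have hwalk := walk_prop G K Q hstep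
  have hattain : ∀ m, ∃ k ∈ K, Q m k := by
    intro m
    obtain ⟨i, hi, hieq⟩ := Finset.exists_mem_eq_sup' hne'
      (fun k => T (F^[m] hstar) k - F^[m] hstar k)
    refine ⟨i, hKfin.mem_toFinset.mp hi, ?_⟩
    have : lamF G Y hKfin hKne (F^[m] hstar) = T (F^[m] hstar) i - F^[m] hstar i := hieq
    rw [hlamconst m] at this
    exact this.symm
  -- Q holds at level 0 everywhere on K
  have hQ0 : ∀ k' ∈ K, Q 0 k' := by
    intro k' hk'
    haveI : Fintype ↥K := hKfin.fintype
    set N : ℕ := Fintype.card ↥K with hN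
    obtain ⟨k, hkK, hQN⟩ := hattain N
    obtain ⟨p0⟩ := hKconn.preconnected ⟨k, hkK⟩ ⟨k', hk'⟩
    set p : (G.induce K).Walk ⟨k, hkK⟩ ⟨k', hk'⟩ := p0.bypass with hp
    have hplen : p.length < N := p0.bypass_isPath.length_lt
    have h1 : Q (0 + p.length) k := by
      have h2 : Q (p.length + (N - p.length)) k := by
        rw [show p.length + (N - p.length) = N from Nat.add_sub_cancel' hplen.le]
        exact hQN
      have := hQdown (N - p.length) p.length k hkK h2
      simpa using this
    exact hwalk ⟨k, hkK⟩ ⟨k', hk'⟩ p 0 h1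
  -- assemble
  refine ⟨extF G Y hKfin hKne hstar, lamb, ?_, ?_, ?_, ?_⟩
  · exact extF_edgeLip G X Y hKfin hKne hconn hcover hnoedge hXY hstar hstarklip
  · intro k hk
    have := hQ0 k hk
    simp only [hQdef, Function.iterate_zero_apply] at this
    have hfk : extF G Y hKfin hKne hstar k = hstar k := extF_eqK G Y hKfin hKne hstar hk
    rw [hfk]
    exact this
  · intro x hx
    have hxK : x ∉ K := Set.disjoint_left.mp hXK hx
    have hxY : x ∉ Y := Set.disjoint_left.mp hXY hx
    constructor
    · intro g hg hgK
      exact extF_min G Y hKfin hKne hconn hstar g hg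
        (fun k hk => by rw [hgK k hk, extF_eqK G Y hKfin hKne hstar hk]) hxK hxY
    · -- Δf ≥ lamb on X
      set f := extF G Y hKfin hKne hstar with hf
      have hfLip := extF_edgeLip G X Y hKfin hKne hconn hcover hnoedge hXY hstar hstarklip
      have hPedge := hcurv f 1 hfLip
      have hg'edge : ∀ u v, G.Adj u v →
          |(fun v => lazyOp G f v - lamb) u - (fun v => lazyOp G f v - lamb) v| ≤ 1 := by
        intro u v huv
        simpa using hPedge u v huv
      have hg'K : ∀ k ∈ K, lazyOp G f k - lamb = hstar k := by
        intro k hk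
        have h1 := hQ0 k hk
        simp only [hQdef, Function.iterate_zero_apply] at h1
        have : T hstar k = lazyOp G f k := rfl
        rw [this] at h1
        linarith
      have := extF_min G Y hKfin hKne hconn hstar (fun v => lazyOp G f v - lamb)
        hg'edge hg'K hxK hxY
      linarith
  · intro y hy
    have hyK : y ∉ K := fun h => Set.disjoint_left.mp hKY h hy
    constructor
    · intro g hg hgK
      exact extF_max G Y hKfin hKne hconn hstar g hg
        (fun k hk => by rw [hgK k hk, extF_eqK G Y hKfin hKne hstar hk]) hyK hy
    · set f := extF G Y hKfin hKne hstar with hf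
      have hfLip := extF_edgeLip G X Y hKfin hKne hconn hcover hnoedge hXY hstar hstarklip
      have hPedge := hcurv f 1 hfLip
      have hg'edge : ∀ u v, G.Adj u v →
          |(fun v => lazyOp G f v - lamb) u - (fun v => lazyOp G f v - lamb) v| ≤ 1 := by
        intro u v huv
        simpa using hPedge u v huv
      have hg'K : ∀ k ∈ K, lazyOp G f k - lamb = hstar k := by
        intro k hk
        have h1 := hQ0 k hk
        simp only [hQdef, Function.iterate_zero_apply] at h1
        have : T hstar k = lazyOp G f k := rfl
        rw [this] at h1
        linarith
      have := extF_max G Y hKfin hKne hconn hstar (fun v => lazyOp G f v - lamb)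
        hg'edge hg'K hyK hy
      linarith
end
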